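/- arXiv:1503.05293 — 2 statements merged into one kernel-verified Lean document; each statement's English description precedes it below -/
import Mathlib

section
/- Let H be a real Hilbert space, J : H → ℝ a convex, absolutely one-homogeneous functional, and f ∈ H an eigenfunction, i.e. λ • f ∈ ∂J(f) for some λ > 0. Then for every t > 0, the element u(t) = max(1 - λ*t, 0) • f is a minimizer of the variational problem u ↦ (1/2)‖u - f‖² + t * J(u) over H, and it is the unique minimizer. -/
/-!
For an absolutely one-homogeneous `J`, a subgradient `p ∈ ∂J(u)` satisfies `⟪p, u⟫ = J u` and
`|⟪p, v⟫| ≤ J v` for all `v`. For the eigenfunction `f` this shows that `f - u(t)` is a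
subgradient of `t J` at `u(t)`: if `λt ≤ 1` then `f - u(t) = t (λ f)`, and otherwise `u(t) = 0`
and `⟪f, w⟫ ≤ λt |⟪f, w⟫| ≤ t J w`. This optimality condition gives the strong-convexity estimate
`E(u(t)) + ½‖w - u(t)‖² ≤ E(w)` for the energy `E`, hence existence and uniqueness.
-/

open RealInnerProductSpace

section Subgradient

variable {H : Type*} [NormedAddCommGroup H] [InnerProductSpace ℝ H]

def HasSubgradientAt (J : H → ℝ) (p u : H) : Prop :=
  ∀ v, J u + ⟪p, v - u⟫ ≤ J v

theorem HasSubgradientAt.prox_energy_add_sq_le {φ : H → ℝ} {f u : H}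
    (h : HasSubgradientAt φ (f - u) u) (w : H) :
    (1 / 2) * ‖u - f‖ ^ 2 + φ u + (1 / 2) * ‖w - u‖ ^ 2 ≤ (1 / 2) * ‖w - f‖ ^ 2 + φ w := by
  have hexp : ‖w - f‖ ^ 2 = ‖w - u‖ ^ 2 - 2 * ⟪f - u, w - u⟫ + ‖u - f‖ ^ 2 := by
    rw [show w - f = (w - u) + (u - f) by abel, norm_add_sq_real,
      show u - f = -(f - u) by abel, inner_neg_right, real_inner_comm]
    ring
  linarith [h w]

theorem HasSubgradientAt.isUniqueMinimizer_prox {φ : H → ℝ} {f u : H}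
    (h : HasSubgradientAt φ (f - u) u) :
    (∀ w : H, (1 / 2) * ‖u - f‖ ^ 2 + φ u ≤ (1 / 2) * ‖w - f‖ ^ 2 + φ w) ∧
    (∀ w : H, (∀ w' : H, (1 / 2) * ‖w - f‖ ^ 2 + φ w ≤ (1 / 2) * ‖w' - f‖ ^ 2 + φ w') →
      w = u) := by
  refine ⟨fun w => by nlinarith [h.prox_energy_add_sq_le w, sq_nonneg ‖w - u‖], fun w hw => ?_⟩
  have hsq : ‖w - u‖ ^ 2 ≤ 0 := by linarith [hw u, h.prox_energy_add_sq_le w]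
  simpa [sub_eq_zero] using le_antisymm hsq (sq_nonneg _)

section Homogeneous

variable {J : H → ℝ} (hJ : ∀ (c : ℝ) (u : H), J (c • u) = |c| * J u)
include hJ

theorem map_zero_of_abs_homogeneous : J 0 = 0 := by
  simpa using hJ 0 0

theorem map_neg_of_abs_homogeneous (v : H) : J (-v) = J v := by
  simpa using hJ (-1) v

theorem HasSubgradientAt.inner_self_eq_of_abs_homogeneous {p u : H}
    (h : HasSubgradientAt J p u) : ⟪p, u⟫ = J u := by
  have h0 := h 0
  have h2 := h ((2 : ℝ) • u)
  rw [map_zero_of_abs_homogeneous hJ, zero_sub, inner_neg_right] at h0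
  rw [hJ, abs_two, show (2 : ℝ) • u - u = u by module] at h2
  linarith

theorem HasSubgradientAt.abs_inner_le_of_abs_homogeneous {p u : H}
    (h : HasSubgradientAt J p u) (v : H) : |⟪p, v⟫| ≤ J v := by
  have inner_le : ∀ v, ⟪p, v⟫ ≤ J v := fun v => by
    have := h v
    rw [inner_sub_right, h.inner_self_eq_of_abs_homogeneous hJ] at this
    linarith
  rw [abs_le]
  constructor
  · linarith [inner_le (-v), inner_neg_right (𝕜 := ℝ) p v, map_neg_of_abs_homogeneous hJ v]
  · exact inner_le v

theorem hasSubgradientAt_smul_sub_of_eigen {f : H} {lam t : ℝ} (ht : 0 ≤ t)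
    (hc : 0 ≤ 1 - lam * t) (heig : HasSubgradientAt J (lam • f) f) :
    HasSubgradientAt (fun w => t * J w) (f - (1 - lam * t) • f) ((1 - lam * t) • f) := by
  intro w
  have hJf := heig.inner_self_eq_of_abs_homogeneous hJ
  have hinner : ⟪f - (1 - lam * t) • f, w - (1 - lam * t) • f⟫
      = t * (⟪lam • f, w⟫ - (1 - lam * t) * ⟪lam • f, f⟫) := by
    simp only [inner_sub_left, inner_sub_right, real_inner_smul_left, real_inner_smul_right]
    ring
  have hw : t * ⟪lam • f, w⟫ ≤ t * J w :=
    mul_le_mul_of_nonneg_left (le_of_abs_le (heig.abs_inner_le_of_abs_homogeneous hJ w)) ht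
  simp only [hJ, abs_of_nonneg hc, hinner, hJf]
  linarith

theorem hasSubgradientAt_zero_of_eigen {f : H} {lam t : ℝ} (ht : 0 < t) (hc : 1 < lam * t)
    (heig : HasSubgradientAt J (lam • f) f) :
    HasSubgradientAt (fun w => t * J w) f 0 := by
  intro w
  have hlam : 0 < lam := pos_of_mul_pos_left (one_pos.trans hc) ht.le
  calc t * J 0 + ⟪f, w - 0⟫ = ⟪f, w⟫ := by rw [map_zero_of_abs_homogeneous hJ, sub_zero]; ring
    _ ≤ |⟪f, w⟫| := le_abs_self _
    _ ≤ lam * t * |⟪f, w⟫| := le_mul_of_one_le_left (abs_nonneg _) hc.le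
    _ = t * |⟪lam • f, w⟫| := by rw [real_inner_smul_left, abs_mul, abs_of_pos hlam]; ring
    _ ≤ t * J w := mul_le_mul_of_nonneg_left (heig.abs_inner_le_of_abs_homogeneous hJ w) ht.le

theorem hasSubgradientAt_prox_of_eigen {f : H} {lam t : ℝ} (ht : 0 < t)
    (heig : HasSubgradientAt J (lam • f) f) :
    HasSubgradientAt (fun w => t * J w) (f - max (1 - lam * t) 0 • f)
      (max (1 - lam * t) 0 • f) := by
  rcases le_or_gt 0 (1 - lam * t) with hc | hc
  · rw [max_eq_left hc]
    exact hasSubgradientAt_smul_sub_of_eigen hJ ht.le hc heig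
  · rw [max_eq_right hc.le, zero_smul, sub_zero]
    exact hasSubgradientAt_zero_of_eigen hJ ht (by linarith) heig

end Homogeneous

end Subgradient

theorem spectral_stmt5_general {H : Type*} [NormedAddCommGroup H] [InnerProductSpace ℝ H]
    (J : H → ℝ)
    (hJhom : ∀ (c : ℝ) (u : H), J (c • u) = |c| * J u)
    (f : H) (lam : ℝ)
    (heig : ∀ v : H, J f + ⟪lam • f, v - f⟫ ≤ J v)
    (t : ℝ) (ht : 0 < t) :
    (∀ w : H,
      (1 / 2) * ‖max (1 - lam * t) 0 • f - f‖ ^ 2 + t * J (max (1 - lam * t) 0 • f)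
        ≤ (1 / 2) * ‖w - f‖ ^ 2 + t * J w) ∧
    (∀ w : H,
      (∀ w' : H, (1 / 2) * ‖w - f‖ ^ 2 + t * J w ≤ (1 / 2) * ‖w' - f‖ ^ 2 + t * J w') →
      w = max (1 - lam * t) 0 • f) :=
  (hasSubgradientAt_prox_of_eigen hJhom ht heig).isUniqueMinimizer_prox

/-- For an eigenfunction `f` of `J` (i.e. `λ • f ∈ ∂J(f)`, `λ > 0`) and `t > 0`,
`u(t) = max(1 - λt, 0) • f` is the unique minimizer of `u ↦ (1/2)‖u - f‖² + t J(u)`. -/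
theorem spectral_stmt5 {H : Type*} [NormedAddCommGroup H] [InnerProductSpace ℝ H]
    [CompleteSpace H] (J : H → ℝ) (hJconv : ConvexOn ℝ Set.univ J)
    (hJhom : ∀ (c : ℝ) (u : H), J (c • u) = |c| * J u)
    (f : H) (lam : ℝ) (hlam : 0 < lam)
    (heig : ∀ v : H, J f + ⟪lam • f, v - f⟫ ≤ J v)
    (t : ℝ) (ht : 0 < t) :
    (∀ w : H,
      (1 / 2) * ‖max (1 - lam * t) 0 • f - f‖ ^ 2 + t * J (max (1 - lam * t) 0 • f)
        ≤ (1 / 2) * ‖w - f‖ ^ 2 + t * J w) ∧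
    (∀ w : H,
      (∀ w' : H, (1 / 2) * ‖w - f‖ ^ 2 + t * J w ≤ (1 / 2) * ‖w' - f‖ ^ 2 + t * J w') →
      w = max (1 - lam * t) 0 • f) :=
  spectral_stmt5_general J hJhom f lam heig t ht
end

section
/- Let g ∈ ℝⁿ and define z : [0, ∞) → ℝⁿ by z(s)_i = g_i if s * |g_i| ≥ 1 and z(s)_i = 0 otherwise, and q : [0, ∞) → ℝⁿ by q(s)_i = sign(g_i) * min(s * |g_i|, 1). Then z(0) = 0, q(s) ∈ ∂‖·‖₁(z(s)) for every s ≥ 0, and for every s > 0 with s ∉ {1/|g_i| : g_i ≠ 0}, q is differentiable at s with q'(s) = g - z(s). In other words, (z, q) solves the inverse scale space flow ∂ₛq = g - z, q ∈ ∂‖z‖₁, z(0) = 0, and the solution performs hard thresholding of the coefficients g at threshold 1/s. -/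
/-!
Coordinatewise, `q(s)_i = sign(g_i) min(s|g_i|, 1)` has modulus at most one and equals
`sign(g_i)` exactly where `z(s)_i = g_i ≠ 0`, which is the ℓ¹ subgradient condition. Away from the
kinks `s|g_i| = 1`, `q_i` is locally either the linear function `s g_i` (slope `g_i`, and there
`z(s)_i = 0`) or the constant `sign(g_i)` (slope `0`, and there `z(s)_i = g_i`).
-/

open RealInnerProductSpace Filter Topology

theorem hasDerivAt_piLp {𝕜 ι : Type*} [NontriviallyNormedField 𝕜] [Fintype ι] {E : ι → Type*}
    [∀ i, NormedAddCommGroup (E i)] [∀ i, NormedSpace 𝕜 (E i)] {p : ENNReal} [Fact (1 ≤ p)]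
    {f : 𝕜 → PiLp p E} {f' : PiLp p E} {x : 𝕜} :
    HasDerivAt f f' x ↔ ∀ i, HasDerivAt (fun t => f t i) (f' i) x := by
  simp only [← hasDerivWithinAt_univ, hasDerivWithinAt_iff_hasFDerivWithinAt,
    hasFDerivWithinAt_piLp p]
  rfl

theorem abs_add_mul_sub_le_abs {a b : ℝ} (hb : |b| ≤ 1) (hba : b * a = |a|) (v : ℝ) :
    |a| + b * (v - a) ≤ |v| :=
  calc |a| + b * (v - a) = b * v := by rw [mul_sub, hba]; ring
    _ ≤ |b| * |v| := (le_abs_self _).trans (abs_mul b v).le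
    _ ≤ |v| := mul_le_of_le_one_left (abs_nonneg v) hb

theorem sum_abs_add_inner_sub_le {ι : Type*} [Fintype ι] {z q : EuclideanSpace ℝ ι}
    (hq : ∀ i, |q i| ≤ 1) (hqz : ∀ i, q i * z i = |z i|) (v : EuclideanSpace ℝ ι) :
    ∑ i, |z i| + ⟪q, v - z⟫ ≤ ∑ i, |v i| := by
  have hinner : ⟪q, v - z⟫ = ∑ i, q i * (v i - z i) := by
    simp only [PiLp.inner_apply, PiLp.sub_apply, RCLike.inner_apply, conj_trivial, mul_comm]
  rw [hinner, ← Finset.sum_add_distrib]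
  exact Finset.sum_le_sum fun i _ => abs_add_mul_sub_le_abs (hq i) (hqz i) (v i)

namespace Real

theorem abs_sign_le_one (x : ℝ) : |sign x| ≤ 1 := by
  rcases sign_apply_eq x with h | h | h <;> simp [h]

theorem sign_mul_abs (x : ℝ) : sign x * |x| = x := by
  rcases lt_trichotomy x 0 with h | rfl | h
  · simp [sign_of_neg h, abs_of_neg h]
  · simp
  · simp [sign_of_pos h, abs_of_pos h]

theorem sign_mul_self (x : ℝ) : sign x * x = |x| := by
  rcases lt_trichotomy x 0 with h | rfl | h
  · simp [sign_of_neg h, abs_of_neg h]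
  · simp
  · simp [sign_of_pos h, abs_of_pos h]

end Real

noncomputable def hardThreshold (s x : ℝ) : ℝ := if 1 ≤ s * |x| then x else 0

noncomputable def clippedSign (s x : ℝ) : ℝ := Real.sign x * min (s * |x|) 1

theorem abs_clippedSign_le_one {s : ℝ} (hs : 0 ≤ s) (x : ℝ) : |clippedSign s x| ≤ 1 := by
  have hmin : |min (s * |x|) 1| ≤ 1 := by
    rw [abs_of_nonneg (le_min (by positivity) zero_le_one)]
    exact min_le_right _ _
  rw [clippedSign, abs_mul]
  exact mul_le_one₀ (Real.abs_sign_le_one x) (abs_nonneg _) hmin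

theorem clippedSign_mul_hardThreshold (s x : ℝ) :
    clippedSign s x * hardThreshold s x = |hardThreshold s x| := by
  by_cases h : 1 ≤ s * |x|
  · simp [clippedSign, hardThreshold, h, Real.sign_mul_self]
  · simp [hardThreshold, h]

theorem hasDerivAt_clippedSign {s x : ℝ} (h : s * |x| ≠ 1) :
    HasDerivAt (clippedSign · x) (x - hardThreshold s x) s := by
  have hcont : Continuous fun t : ℝ => t * |x| := by fun_prop
  rcases h.lt_or_gt with hlt | hgt
  · have hlin : (fun t => t * x) =ᶠ[𝓝 s] (clippedSign · x) := by
      filter_upwards [hcont.continuousAt.eventually_lt continuousAt_const hlt] with t ht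
      rw [clippedSign, min_eq_left ht.le, mul_left_comm, Real.sign_mul_abs]
    simpa [hardThreshold, hlt.not_ge] using (hasDerivAt_mul_const x).congr_of_eventuallyEq hlin.symm
  · have hconst : (fun _ => Real.sign x) =ᶠ[𝓝 s] (clippedSign · x) := by
      filter_upwards [continuousAt_const.eventually_lt hcont.continuousAt hgt] with t ht
      rw [clippedSign, min_eq_right ht.le, mul_one]
    simpa [hardThreshold, hgt.le] using (hasDerivAt_const s _).congr_of_eventuallyEq hconst.symm

/-- The inverse scale space flow for `J = ‖·‖₁` performs hard thresholding: with
`z(s)_i = g_i` if `s|g_i| ≥ 1` and `0` otherwise, and `q(s)_i = sign(g_i) * min(s|g_i|, 1)`,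
one has `z(0) = 0`, `q(s) ∈ ∂‖·‖₁(z(s))` for `s ≥ 0`, and `q'(s) = g - z(s)` for
`s > 0` away from the values `1/|g_i|`. -/
theorem spectral_stmt16 (n : ℕ) (g : EuclideanSpace ℝ (Fin n))
    (z q : ℝ → EuclideanSpace ℝ (Fin n))
    (hz : ∀ s : ℝ, 0 ≤ s → ∀ i, z s i = if 1 ≤ s * |g i| then g i else 0)
    (hq : ∀ s : ℝ, 0 ≤ s → ∀ i, q s i = Real.sign (g i) * min (s * |g i|) 1) :
    z 0 = 0 ∧
    (∀ s : ℝ, 0 ≤ s → ∀ v : EuclideanSpace ℝ (Fin n),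
      (∑ i, |z s i|) + ⟪q s, v - z s⟫ ≤ ∑ i, |v i|) ∧
    (∀ s : ℝ, 0 < s → (∀ i, g i ≠ 0 → s ≠ 1 / |g i|) → HasDerivAt q (g - z s) s) := by
  have hz' : ∀ s, 0 ≤ s → ∀ i, z s i = hardThreshold s (g i) := hz
  have hq' : ∀ s, 0 ≤ s → ∀ i, q s i = clippedSign s (g i) := hq
  refine ⟨?_, fun s hs v => ?_, fun s hs hkink => ?_⟩
  · ext i
    simp [hz 0 le_rfl i]
  · refine sum_abs_add_inner_sub_le (fun i => ?_) (fun i => ?_) v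
    · exact hq' s hs i ▸ abs_clippedSign_le_one hs (g i)
    · rw [hq' s hs i, hz' s hs i]
      exact clippedSign_mul_hardThreshold s (g i)
  refine hasDerivAt_piLp.2 fun i => ?_
  have hoff : s * |g i| ≠ 1 := by
    by_cases hg : g i = 0
    · simp [hg]
    · rw [Ne, ← eq_div_iff (abs_ne_zero.2 hg)]
      exact hkink i hg
  have hq_near : (clippedSign · (g i)) =ᶠ[𝓝 s] (q · i) := by
    filter_upwards [eventually_gt_nhds hs] with t ht
    exact (hq' t ht.le i).symm
  simpa [hz' s hs.le i] using (hasDerivAt_clippedSign hoff).congr_of_eventuallyEq hq_near.symm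
end
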